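/- Pauli Twirl: Let n ≥ 1 and let f, g : Fin n → Fin 4 with f ≠ g. Then for every 2^n × 2^n complex matrix ρ (indexed by Fin n → Fin 2), the sum over all Pauli strings of the twirled sandwich vanishes: ∑_{h : Fin n → Fin 4} (P_h)ᴴ · P_f · P_h · ρ · (P_h)ᴴ · (P_g)ᴴ · P_h = 0. -/
import Mathlib

open Matrix Finset

noncomputable def pauli : Fin 4 → Matrix (Fin 2) (Fin 2) ℂ
  | 0 => 1
  | 1 => !![0, 1; 1, 0]
  | 2 => !![0, -Complex.I; Complex.I, 0]
  | 3 => !![1, 0; 0, -1]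

noncomputable def PauliString (n : ℕ) (f : Fin n → Fin 4) :
    Matrix (Fin n → Fin 2) (Fin n → Fin 2) ℂ :=
  fun x y => ∏ i, pauli (f i) (x i) (y i)

noncomputable def ps (n : ℕ) (M : Fin n → Matrix (Fin 2) (Fin 2) ℂ) :
    Matrix (Fin n → Fin 2) (Fin n → Fin 2) ℂ :=
  fun x y => ∏ i, M i (x i) (y i)

lemma ps_mul (n : ℕ) (M N : Fin n → Matrix (Fin 2) (Fin 2) ℂ) :
    ps n M * ps n N = ps n (fun i => M i * N i) := by
  ext x y
  simp only [Matrix.mul_apply, ps, ← Finset.prod_mul_distrib]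
  rw [Finset.prod_univ_sum]
  simp

lemma ps_conjT (n : ℕ) (M : Fin n → Matrix (Fin 2) (Fin 2) ℂ) :
    (ps n M)ᴴ = ps n (fun i => (M i)ᴴ) := by
  ext x y
  simp [ps, Matrix.conjTranspose_apply, map_prod]

lemma ps_smul (n : ℕ) (c : Fin n → ℂ) (M : Fin n → Matrix (Fin 2) (Fin 2) ℂ) :
    ps n (fun i => c i • M i) = (∏ i, c i) • ps n M := by
  ext x y
  simp [ps, Finset.prod_mul_distrib]

noncomputable def eps (a b : Fin 4) : ℂ := if a = b ∨ a = 0 ∨ b = 0 then 1 else -1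

lemma pauli_hermitian (a : Fin 4) : (pauli a)ᴴ = pauli a := by
  fin_cases a <;>
    simp [pauli] <;>
    · ext i j
      fin_cases i <;> fin_cases j <;> simp [Complex.conj_I] <;> ring

lemma pauli_conj (a b : Fin 4) :
    pauli b * pauli a * pauli b = eps a b • pauli a := by
  fin_cases a <;> fin_cases b <;>
    simp [pauli, eps, Matrix.mul_fin_two, Matrix.one_fin_two, Matrix.smul_of,
      Complex.I_mul_I] <;>
    · ext i j
      fin_cases i <;> fin_cases j <;> simp <;> ring_nf <;>
        simp [Complex.I_sq] <;> ring

lemma eps_sum (a b : Fin 4) (hab : a ≠ b) :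
    ∑ c : Fin 4, eps a c * eps b c = 0 := by
  fin_cases a <;> fin_cases b <;> simp_all [Fin.sum_univ_four, eps] <;> norm_num

theorem pauli_twirl (n : ℕ) (hn : 1 ≤ n) (f g : Fin n → Fin 4) (hfg : f ≠ g)
    (ρ : Matrix (Fin n → Fin 2) (Fin n → Fin 2) ℂ) :
    ∑ h : Fin n → Fin 4,
      (PauliString n h)ᴴ * PauliString n f * PauliString n h * ρ *
        (PauliString n h)ᴴ * (PauliString n g)ᴴ * PauliString n h = 0 := by
  have hps : ∀ f : Fin n → Fin 4, PauliString n f = ps n (fun i => pauli (f i)) :=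
    fun _ => rfl
  have hH : ∀ f : Fin n → Fin 4, (PauliString n f)ᴴ = PauliString n f := by
    intro f
    rw [hps, ps_conjT]
    simp [pauli_hermitian]
  have sand : ∀ a h : Fin n → Fin 4,
      PauliString n h * PauliString n a * PauliString n h =
        (∏ i, eps (a i) (h i)) • PauliString n a := by
    intro a h
    rw [hps, hps, ps_mul, ps_mul]
    have : (fun i => pauli (h i) * pauli (a i) * pauli (h i)) =
        fun i => eps (a i) (h i) • pauli (a i) := by
      funext i; exact pauli_conj (a i) (h i)
    rw [this, ps_smul, ← hps]
  have key : ∀ h : Fin n → Fin 4,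
      (PauliString n h)ᴴ * PauliString n f * PauliString n h * ρ *
        (PauliString n h)ᴴ * (PauliString n g)ᴴ * PauliString n h =
      (∏ i, eps (f i) (h i) * eps (g i) (h i)) •
        (PauliString n f * ρ * PauliString n g) := by
    intro h
    rw [hH, hH]
    have e1 : (PauliString n h * PauliString n f * PauliString n h) * ρ *
        (PauliString n h * PauliString n g * PauliString n h) =
        PauliString n h * PauliString n f * PauliString n h * ρ *
          PauliString n h * PauliString n g * PauliString n h := by
      simp only [mul_assoc]
    rw [← e1, sand f h, sand g h, smul_mul_assoc, smul_mul_assoc, mul_smul_comm,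
      smul_smul, Finset.prod_mul_distrib]
  rw [Finset.sum_congr rfl (fun h _ => key h), ← Finset.sum_smul]
  have : (∑ h : Fin n → Fin 4, ∏ i, eps (f i) (h i) * eps (g i) (h i)) = 0 := by
    rw [← Fintype.piFinset_univ,
      ← Finset.prod_univ_sum (t := fun _ : Fin n => (univ : Finset (Fin 4)))
        (f := fun i b => eps (f i) b * eps (g i) b)]
    obtain ⟨i0, hi0⟩ := Function.ne_iff.mp hfg
    exact Finset.prod_eq_zero (Finset.mem_univ i0) (eps_sum _ _ hi0)
  rw [this, zero_smul]
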